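/- arXiv:1103.2877 — 3 statements merged into one kernel-verified Lean document; each statement's English description precedes it below -/
import Mathlib

section
/- If γ ≤ α × β for antichains α, β, γ, then π_{sp(α)}(γ) ≤ α. -/
open Finset

/-- Families of finite subsets of ℕ. -/
abbrev Fam := Finset (Finset ℕ)

/-- `α` is an antichain of subsets of `N`: all members are subsets of `N`
and no member is a (proper) subset of another. -/
def IsAC (N : Finset ℕ) (α : Fam) : Prop :=
  (∀ A ∈ α, A ⊆ N) ∧ ∀ A ∈ α, ∀ B ∈ α, A ⊆ B → A = B

instance (N : Finset ℕ) : DecidablePred (IsAC N) := fun α => by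
  unfold IsAC; infer_instance

/-- The partial order on antichains: every member of `α` is contained in some member of `β`. -/
def amle (α β : Fam) : Prop := ∀ A ∈ α, ∃ B ∈ β, A ⊆ B

instance (α β : Fam) : Decidable (amle α β) := by
  unfold amle; infer_instance

/-- `sup` of a family: its maximal elements under inclusion. -/
def maxels (S : Fam) : Fam := S.filter (fun A => ∀ B ∈ S, A ⊆ B → A = B)

/-- The span of an antichain: the union of its members. -/
def sp (α : Fam) : Finset ℕ := α.sup id

/-- Join: maximal elements of the union. -/
def joinAC (α β : Fam) : Fam := maxels (α ∪ β)

/-- Meet: maximal elements of the pairwise intersections. -/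
def meetAC (α β : Fam) : Fam := maxels ((α ×ˢ β).image fun p => p.1 ∩ p.2)

/-- Projection onto `M`: maximal elements of {A ∩ M : A ∈ α}. -/
def proj (M : Finset ℕ) (α : Fam) : Fam := maxels (α.image (· ∩ M))

/-- External product. -/
def xprod (α β : Fam) : Fam :=
  maxels ((α ×ˢ β).image fun p => (p.1 \ sp β) ∪ (p.2 \ sp α) ∪ (p.1 ∩ p.2))

/-- The finite set of all antichains of subsets of `N`. -/
def AMTf (N : Finset ℕ) : Finset Fam := N.powerset.powerset.filter (IsAC N)

/-- The interval `[a, b]` inside `AMTf N`, as a `Finset`. -/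
def intervalF (N : Finset ℕ) (a b : Fam) : Finset Fam :=
  (AMTf N).filter (fun κ => amle a κ ∧ amle κ b)

/-- The interval `[a, b]` of antichains of subsets of `N`, as a `Set`. -/
def intervalSet (N : Finset ℕ) (a b : Fam) : Set Fam :=
  {κ | IsAC N κ ∧ amle a κ ∧ amle κ b}

/-- n-ary join of a family indexed by the members of `σ`. -/
def bigJoin (σ : Fam) (κ : Finset ℕ → Fam) : Fam := maxels (σ.sup κ)

/-- n-ary external product of a family indexed by the members of `σ`. -/
noncomputable def bigX (σ : Fam) (κ : Finset ℕ → Fam) : Fam :=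
  (σ.toList.map κ).foldr xprod {(∅ : Finset ℕ)}

/-- Nonempty antichains of subsets of `S` with span exactly `S`. -/
def Upsf (S : Finset ℕ) : Finset Fam :=
  S.powerset.powerset.filter (fun κ => IsAC S κ ∧ κ ≠ ∅ ∧ sp κ = S)

theorem maxels_subset (S : Fam) : maxels S ⊆ S := filter_subset _ _

theorem amle_proj_of_forall_inter_subset {M : Finset ℕ} {γ α : Fam}
    (hγ : ∀ C ∈ γ, ∃ A ∈ α, C ∩ M ⊆ A) : amle (proj M γ) α := by
  intro X hX
  obtain ⟨C, hC, rfl⟩ := mem_image.mp (maxels_subset _ hX)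
  exact hγ C hC

theorem union_sdiff_union_inter_inter_subset_left {ι : Type*} [DecidableEq ι]
    (A B T M : Finset ι) : (A \ T ∪ B \ M ∪ A ∩ B) ∩ M ⊆ A := by
  intro x
  simp only [mem_inter, mem_union, mem_sdiff]
  tauto

theorem exists_inter_sp_subset_of_mem_xprod {α β : Fam} {D : Finset ℕ} (hD : D ∈ xprod α β) :
    ∃ A ∈ α, D ∩ sp α ⊆ A := by
  obtain ⟨⟨A, B⟩, hAB, rfl⟩ := mem_image.mp (maxels_subset _ hD)
  exact ⟨A, (mem_product.mp hAB).1, union_sdiff_union_inter_inter_subset_left A B (sp β) (sp α)⟩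

theorem proj_le_of_le_xprod_general (α β γ : Fam)
    (h : amle γ (xprod α β)) :
    amle (proj (sp α) γ) α := by
  refine amle_proj_of_forall_inter_subset fun C hC => ?_
  obtain ⟨D, hD, hCD⟩ := h C hC
  obtain ⟨A, hA, hDA⟩ := exists_inter_sp_subset_of_mem_xprod hD
  exact ⟨A, hA, (inter_subset_inter_right hCD).trans hDA⟩

/-- if `γ ≤ α × β` then `π_{sp α}(γ) ≤ α`. -/
theorem proj_le_of_le_xprod (N : Finset ℕ) (α β γ : Fam)
    (hα : IsAC N α) (hβ : IsAC N β) (hγ : IsAC N γ)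
    (h : amle γ (xprod α β)) :
    amle (proj (sp α) γ) α :=
  proj_le_of_le_xprod_general α β γ h
end

section
/- For every antichain κ in the interval [α ∨ β, α × β], the projections are exactly recovered: π_{sp(α)}(κ) = α and π_{sp(β)}(κ) = β. -/
open Finset

/-! Take `K ∈ κ`. It lies below some `(A \ sp β) ∪ (B \ sp α) ∪ (A ∩ B)` of `α × β`, whose trace
on `sp α` is contained in `A`; so every trace `K ∩ sp α` lies below a member of `α`. Conversely each
`A ∈ α` lies below some `K ∈ κ`, because `α ≤ α ∨ β ≤ κ`, and then `A ⊆ K ∩ sp α ⊆ A'` with `A' ∈ α`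
forces `A = K ∩ sp α` since `α` is an antichain. Hence the maximal traces are exactly the members
of `α`. The claim for `β` follows because `∨` and `×` are commutative. -/

lemma subset_sp {α : Fam} {A : Finset ℕ} (hA : A ∈ α) : A ⊆ sp α :=
  le_sup (f := id) hA

lemma amle_trans {α β γ : Fam} (hαβ : amle α β) (hβγ : amle β γ) : amle α γ := fun A hA =>
  let ⟨B, hB, hAB⟩ := hαβ A hA
  let ⟨C, hC, hBC⟩ := hβγ B hB
  ⟨C, hC, hAB.trans hBC⟩

lemma amle_of_subset {α β : Fam} (h : α ⊆ β) : amle α β := fun A hA => ⟨A, h hA, subset_rfl⟩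

lemma amle_maxels (S : Fam) : amle S (maxels S) := by
  intro A hA
  obtain ⟨M, hM, hmax⟩ :=
    (S.filter (A ⊆ ·)).exists_max_image card ⟨A, mem_filter.mpr ⟨hA, subset_rfl⟩⟩
  rw [mem_filter] at hM
  refine ⟨M, mem_filter.mpr ⟨hM.1, fun C hC hMC => ?_⟩, hM.2⟩
  exact eq_of_subset_of_card_le hMC (hmax C (mem_filter.mpr ⟨hC, hM.2.trans hMC⟩))

lemma amle_joinAC_left (α β : Fam) : amle α (joinAC α β) :=
  amle_trans (amle_of_subset subset_union_left) (amle_maxels _)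

lemma joinAC_comm (α β : Fam) : joinAC α β = joinAC β α := by
  rw [joinAC, joinAC, union_comm]

lemma xprod_comm (α β : Fam) : xprod α β = xprod β α := by
  unfold xprod
  congr 1
  ext X
  simp only [mem_image, mem_product, Prod.exists]
  constructor <;>
  · rintro ⟨A, B, ⟨hA, hB⟩, rfl⟩
    exact ⟨B, A, ⟨hB, hA⟩, by rw [union_comm (B \ _), inter_comm]⟩

lemma maxels_eq_of_antichain {S α : Fam} (hα : ∀ A ∈ α, ∀ B ∈ α, A ⊆ B → A = B)
    (hsub : α ⊆ S) (hle : amle S α) : maxels S = α := by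
  ext X
  simp only [maxels, mem_filter]
  constructor
  · rintro ⟨hX, hmax⟩
    obtain ⟨A, hA, hXA⟩ := hle X hX
    rwa [hmax A (hsub hA) hXA]
  · intro hX
    refine ⟨hsub hX, fun Y hY hXY => ?_⟩
    obtain ⟨A, hA, hYA⟩ := hle Y hY
    obtain rfl := hα X hX A hA (hXY.trans hYA)
    exact hXY.antisymm hYA

lemma proj_sp_eq_of_le {α κ : Fam} (hα : ∀ A ∈ α, ∀ B ∈ α, A ⊆ B → A = B)
    (hακ : amle α κ) (hκα : amle (κ.image (· ∩ sp α)) α) : proj (sp α) κ = α := by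
  refine maxels_eq_of_antichain hα (fun A hA => ?_) hκα
  obtain ⟨K, hK, hAK⟩ := hακ A hA
  have hA_trace : A ⊆ K ∩ sp α := subset_inter hAK (subset_sp hA)
  obtain ⟨A', hA', htrace_A'⟩ := hκα _ (mem_image_of_mem _ hK)
  obtain rfl := hα A hA A' hA' (hA_trace.trans htrace_A')
  rw [hA_trace.antisymm htrace_A']
  exact mem_image_of_mem _ hK

lemma exists_inter_sp_left_subset_of_mem_xprod {α β : Fam} {X : Finset ℕ}
    (hX : X ∈ xprod α β) : ∃ A ∈ α, X ∩ sp α ⊆ A := by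
  obtain ⟨⟨A, B⟩, hAB, rfl⟩ := mem_image.mp (mem_filter.mp hX).1
  refine ⟨A, (mem_product.mp hAB).1, fun x hx => ?_⟩
  simp only [mem_inter, mem_union, mem_sdiff] at hx
  tauto

lemma proj_sp_left_eq {α β κ : Fam} (hα : ∀ A ∈ α, ∀ B ∈ α, A ⊆ B → A = B)
    (h1 : amle (joinAC α β) κ) (h2 : amle κ (xprod α β)) : proj (sp α) κ = α := by
  refine proj_sp_eq_of_le hα (amle_trans (amle_joinAC_left α β) h1) ?_
  simp only [amle, mem_image, forall_exists_index, and_imp, forall_apply_eq_imp_iff₂]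
  intro K hK
  obtain ⟨X, hX, hKX⟩ := h2 K hK
  obtain ⟨A, hA, hXA⟩ := exists_inter_sp_left_subset_of_mem_xprod hX
  exact ⟨A, hA, (inter_subset_inter_right hKX).trans hXA⟩

theorem interval_invariant_general (N : Finset ℕ) (α β κ : Fam)
    (hα : IsAC N α) (hβ : IsAC N β)
    (h1 : amle (joinAC α β) κ) (h2 : amle κ (xprod α β)) :
    proj (sp α) κ = α ∧ proj (sp β) κ = β :=
  ⟨proj_sp_left_eq hα.2 h1 h2,
    proj_sp_left_eq hβ.2 (joinAC_comm α β ▸ h1) (xprod_comm α β ▸ h2)⟩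

/-- the projections of any element of `[α ∨ β, α × β]`
recover `α` and `β` exactly. -/
theorem interval_invariant (N : Finset ℕ) (α β κ : Fam)
    (hα : IsAC N α) (hβ : IsAC N β) (hκ : IsAC N κ)
    (h1 : amle (joinAC α β) κ) (h2 : amle κ (xprod α β)) :
    proj (sp α) κ = α ∧ proj (sp β) κ = β :=
  interval_invariant_general N α β κ hα hβ h1 h2
end

section
/- For any n > 1, the number of antichains of subsets of {1,...,n} satisfies |AMT(1,n)| = Σ_{α ∈ AMT(1,n-1)} |[∅, α]|, i.e., the Dedekind-type number for n equals the sum over all antichains α on {1,...,n-1} of the number of antichains dominated by α (including the empty antichain). -/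
/-!
An antichain `γ` on `M ∪ {n}` (with `n ∉ M`) is determined by the pair `(α, κ)`, where
`κ = {A \ {n} : n ∈ A ∈ γ}` is its link at `n` (`γ.memberSubfamily n`) and `α` is the family
of maximal sets among `{A \ {n} : A ∈ γ}`. Both are antichains on `M` and `κ ≤ α`; conversely
every such pair comes from `γ = (α \ κ) ∪ {K ∪ {n} : K ∈ κ}`. Counting pairs gives
`|AMT(M ∪ {n})| = Σ_α |[∅, α]|`.
-/

open Finset

lemma mem_AMTf {N : Finset ℕ} {α : Fam} : α ∈ AMTf N ↔ IsAC N α := by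
  rw [AMTf, mem_filter, mem_powerset, and_iff_right_iff_imp]
  exact fun h A hA => mem_powerset.2 (h.1 A hA)

lemma amle_empty_left (κ : Fam) : amle ∅ κ := fun _ h => absurd h (notMem_empty _)

lemma intervalF_empty_left (N : Finset ℕ) (α : Fam) :
    intervalF N ∅ α = (AMTf N).filter (amle · α) := by
  simp only [intervalF, amle_empty_left, true_and]

lemma mem_maxels {S : Fam} {A : Finset ℕ} :
    A ∈ maxels S ↔ A ∈ S ∧ ∀ B ∈ S, A ⊆ B → A = B := mem_filter

lemma maxels_isAntichain (S : Fam) : ∀ A ∈ maxels S, ∀ B ∈ maxels S, A ⊆ B → A = B :=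
  fun _ hA _ hB => (mem_maxels.1 hA).2 _ (mem_maxels.1 hB).1

lemma exists_subset_mem_maxels {S : Fam} {B : Finset ℕ} (hB : B ∈ S) :
    ∃ C ∈ maxels S, B ⊆ C := by
  obtain ⟨C, hC, hmax⟩ :=
    (S.filter (B ⊆ ·)).exists_max_image card ⟨B, mem_filter.2 ⟨hB, subset_rfl⟩⟩
  rw [mem_filter] at hC
  refine ⟨C, mem_maxels.2 ⟨hC.1, fun D hD hCD => ?_⟩, hC.2⟩
  exact eq_of_subset_of_card_le hCD (hmax D (mem_filter.2 ⟨hD, hC.2.trans hCD⟩))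

lemma maxels_union_of_amle {N : Finset ℕ} {α κ : Fam} (hα : IsAC N α) (hκα : amle κ α) :
    maxels (α ∪ κ) = α := by
  have below_α : ∀ D ∈ α ∪ κ, ∃ A ∈ α, D ⊆ A := by
    intro D hD
    rcases mem_union.1 hD with hD | hD
    exacts [⟨D, hD, subset_rfl⟩, hκα D hD]
  ext C
  rw [mem_maxels]
  constructor
  · rintro ⟨hC, hmax⟩
    obtain ⟨A, hA, hCA⟩ := below_α C hC
    exact hmax A (mem_union_left _ hA) hCA ▸ hA
  · intro hC
    refine ⟨mem_union_left _ hC, fun D hD hCD => ?_⟩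
    obtain ⟨A, hA, hDA⟩ := below_α D hD
    obtain rfl := hα.2 C hC A hA (hCD.trans hDA)
    exact hCD.antisymm hDA

def contract (n : ℕ) (γ : Fam) : Fam := maxels (γ.image (erase · n))

def extend (n : ℕ) (α κ : Fam) : Fam := (α \ κ) ∪ κ.image (insert n)

section OneElement

variable {n : ℕ} {M : Finset ℕ}

lemma isAC_memberSubfamily {γ : Fam} (hγ : IsAC (insert n M) γ) :
    IsAC M (γ.memberSubfamily n) := by
  refine ⟨fun K hK => ?_, fun K hK L hL hKL => ?_⟩
  · obtain ⟨hK, hnK⟩ := mem_memberSubfamily.1 hK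
    exact (insert_subset_insert_iff hnK).1 (hγ.1 _ hK)
  · obtain ⟨hK, hnK⟩ := mem_memberSubfamily.1 hK
    obtain ⟨hL, hnL⟩ := mem_memberSubfamily.1 hL
    have := congrArg (erase · n) (hγ.2 _ hK _ hL (insert_subset_insert n hKL))
    simpa only [erase_insert hnK, erase_insert hnL] using this

lemma isAC_contract {γ : Fam} (hγ : IsAC (insert n M) γ) : IsAC M (contract n γ) := by
  refine ⟨fun A hA => ?_, maxels_isAntichain _⟩
  obtain ⟨C, hC, rfl⟩ := mem_image.1 (mem_maxels.1 hA).1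
  exact subset_insert_iff.1 (hγ.1 C hC)

lemma memberSubfamily_amle_contract (γ : Fam) : amle (γ.memberSubfamily n) (contract n γ) :=
  fun _ hK => exists_subset_mem_maxels
    (memberSubfamily_union_nonMemberSubfamily n γ ▸ mem_union_left _ hK)

lemma extend_contract_memberSubfamily {γ : Fam} (hγ : IsAC (insert n M) γ) :
    extend n (contract n γ) (γ.memberSubfamily n) = γ := by
  ext X
  by_cases hnX : n ∈ X
  · have hX_contract : X ∉ contract n γ := fun hX => by
      obtain ⟨C, -, rfl⟩ := mem_image.1 (mem_maxels.1 hX).1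
      exact notMem_erase n C hnX
    rw [extend, mem_union, mem_sdiff, image_insert_memberSubfamily, mem_filter]
    tauto
  · have hX_insert : X ∉ (γ.memberSubfamily n).image (insert n) := fun hX => by
      obtain ⟨K, -, rfl⟩ := mem_image.1 hX
      exact hnX (mem_insert_self n K)
    rw [extend, mem_union, mem_sdiff, mem_memberSubfamily, or_iff_left hX_insert]
    constructor
    · rintro ⟨hX, hX_link⟩
      obtain ⟨C, hC, rfl⟩ := mem_image.1 (mem_maxels.1 hX).1
      by_cases hnC : n ∈ C
      · exact absurd ⟨(insert_erase hnC).symm ▸ hC, hnX⟩ hX_link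
      · rwa [erase_eq_of_notMem hnC]
    · intro hX
      refine ⟨mem_maxels.2 ⟨mem_image.2 ⟨X, hX, erase_eq_of_notMem hnX⟩, ?_⟩, ?_⟩
      · rintro _ hD hXD
        obtain ⟨C, hC, rfl⟩ := mem_image.1 hD
        obtain rfl := hγ.2 X hX C hC (hXD.trans (erase_subset n C))
        exact (erase_eq_of_notMem hnX).symm
      · rintro ⟨hX', -⟩
        exact hnX (hγ.2 X hX _ hX' (subset_insert n X) ▸ mem_insert_self n X)

section Extend

variable {α κ : Fam}

lemma isAC_extend (hnα : ∀ A ∈ α, n ∉ A) (hnκ : ∀ K ∈ κ, n ∉ K) (hα : IsAC M α)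
    (hκ : IsAC M κ) (hκα : amle κ α) : IsAC (insert n M) (extend n α κ) := by
  refine ⟨fun A hA => ?_, fun A hA B hB hAB => ?_⟩
  · rcases mem_union.1 hA with hA | hA
    · exact (hα.1 A (mem_sdiff.1 hA).1).trans (subset_insert n M)
    · obtain ⟨K, hK, rfl⟩ := mem_image.1 hA
      exact insert_subset_insert n (hκ.1 K hK)
  rcases mem_union.1 hA with hA | hA <;> rcases mem_union.1 hB with hB | hB
  · exact hα.2 A (mem_sdiff.1 hA).1 B (mem_sdiff.1 hB).1 hAB
  · obtain ⟨hAα, hAκ⟩ := mem_sdiff.1 hA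
    obtain ⟨L, hL, rfl⟩ := mem_image.1 hB
    -- `A ⊆ L ⊆ A'` with `A, A' ∈ α` forces `A = L ∈ κ`.
    have hAL : A ⊆ L := (subset_insert_iff_of_notMem (hnα A hAα)).1 hAB
    obtain ⟨A', hA', hLA'⟩ := hκα L hL
    obtain rfl := hα.2 A hAα A' hA' (hAL.trans hLA')
    exact absurd (hLA'.antisymm hAL ▸ hL) hAκ
  · obtain ⟨K, -, rfl⟩ := mem_image.1 hA
    exact absurd (hAB (mem_insert_self n K)) (hnα B (mem_sdiff.1 hB).1)
  · obtain ⟨K, hK, rfl⟩ := mem_image.1 hA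
    obtain ⟨L, hL, rfl⟩ := mem_image.1 hB
    rw [hκ.2 K hK L hL ((insert_subset_insert_iff (hnκ K hK)).1 hAB)]

lemma memberSubfamily_extend (hnα : ∀ A ∈ α, n ∉ A) (hnκ : ∀ K ∈ κ, n ∉ K) :
    (extend n α κ).memberSubfamily n = κ := by
  have : (α \ κ).memberSubfamily n = ∅ :=
    eq_empty_of_forall_notMem fun K hK => by
      have hK := (mem_memberSubfamily.1 hK).1
      exact hnα _ (mem_sdiff.1 hK).1 (mem_insert_self n K)
  rw [extend, memberSubfamily_union, this, memberSubfamily_image_insert hnκ, empty_union]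

lemma nonMemberSubfamily_extend (hnα : ∀ A ∈ α, n ∉ A) :
    (extend n α κ).nonMemberSubfamily n = α \ κ := by
  rw [extend, nonMemberSubfamily_union, nonMemberSubfamily_image_insert, union_empty,
    nonMemberSubfamily, filter_true_of_mem fun A hA => hnα A (mem_sdiff.1 hA).1]

lemma contract_extend (hnα : ∀ A ∈ α, n ∉ A) (hnκ : ∀ K ∈ κ, n ∉ K) (hα : IsAC M α)
    (hκα : amle κ α) : contract n (extend n α κ) = α := by
  rw [contract, ← memberSubfamily_union_nonMemberSubfamily, memberSubfamily_extend hnα hnκ,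
    nonMemberSubfamily_extend hnα, union_sdiff_self_eq_union, union_comm,
    maxels_union_of_amle hα hκα]

end Extend

lemma card_AMTf_insert (hn : n ∉ M) :
    (AMTf (insert n M)).card = ∑ α ∈ AMTf M, ((AMTf M).filter (amle · α)).card := by
  have notMem : ∀ {β : Fam}, IsAC M β → ∀ A ∈ β, n ∉ A :=
    fun hβ A hA hnA => hn (hβ.1 A hA hnA)
  rw [← card_sigma]
  refine card_nbij' (fun γ => ⟨contract n γ, γ.memberSubfamily n⟩) (fun p => extend n p.1 p.2)
    ?_ ?_ ?_ ?_
  · intro γ hγ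
    rw [mem_coe, mem_AMTf] at hγ
    simp only [mem_coe, mem_sigma, mem_filter, mem_AMTf]
    exact ⟨isAC_contract hγ, isAC_memberSubfamily hγ, memberSubfamily_amle_contract γ⟩
  · rintro ⟨α, κ⟩ hp
    simp only [mem_coe, mem_sigma, mem_filter, mem_AMTf] at hp ⊢
    exact isAC_extend (notMem hp.1) (notMem hp.2.1) hp.1 hp.2.1 hp.2.2
  · intro γ hγ
    exact extend_contract_memberSubfamily (mem_AMTf.1 hγ)
  · rintro ⟨α, κ⟩ hp
    simp only [mem_coe, mem_sigma, mem_filter, mem_AMTf] at hp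
    dsimp only
    rw [contract_extend (notMem hp.1) (notMem hp.2.1) hp.1 hp.2.2,
      memberSubfamily_extend (notMem hp.1) (notMem hp.2.1)]

end OneElement

/-- one-element recursion for Dedekind-type numbers. -/
theorem one_element_recursion (n : ℕ) (h : 1 < n) :
    (AMTf (Finset.Icc 1 n)).card =
      ∑ α ∈ AMTf (Finset.Icc 1 (n - 1)),
        (intervalF (Finset.Icc 1 (n - 1)) (∅ : Fam) α).card := by
  have hIcc : Finset.Icc 1 n = insert n (Finset.Icc 1 (n - 1)) := by
    ext x
    simp only [mem_Icc, mem_insert]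
    omega
  have hn : n ∉ Finset.Icc 1 (n - 1) := by
    simp only [mem_Icc]
    omega
  simp only [intervalF_empty_left, hIcc, card_AMTf_insert hn]
end
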